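/- Let R be a commutative Noetherian local ring, X a finitely generated R-module, and x an element of R that is both R-regular and X-regular. If a finitely generated R/(x)-module M belongs to the resolving closure res_{R/(x)}(X/xX) inside finitely generated R/(x)-modules, then the syzygy Ω_R M (of M viewed as an R-module) belongs to the resolving closure res_R(X). -/

import Mathlib

open CategoryTheory IsLocalRing

noncomputable section

variable (R : Type) [CommRing R] [IsLocalRing R]

/-- `K` is (isomorphic to) the first syzygy of `M`, i.e. the kernel of a
minimal free cover of `M`. -/
def IsSyzygyOf (K M : ModuleCat.{0} R) : Prop :=
  ∃ (n : ℕ) (f : (Fin n → R) →ₗ[R] M),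
    Function.Surjective f ∧
    LinearMap.ker f ≤ (maximalIdeal R) • (⊤ : Submodule R (Fin n → R)) ∧
    Nonempty (K ≃ₗ[R] LinearMap.ker f)

/-!
Let `T` be the class of `R/(x)`-modules `N` whose syzygy `Ω_R N` lies in `res_R(X)`. By Schanuel's
lemma, `Ω_R N` may be computed from any surjection onto `N` from a module of `res_R(X)`, not only
from a free one. The horseshoe lemma and a comparison of kernels then show that `T` is resolving.
It contains `R/(x)`, because the kernel of `R → R/(x)` is `xR ≅ R`, and `X/xX`, because the
kernel of `X → X/xX` is `xX ≅ X`, both isomorphisms being multiplication by the regular element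
`x`. Hence `T` contains `res_{R/(x)}(X/xX)`, and in particular `M`.
-/

section Resolving

variable {A : Type} [CommRing A]

structure IsResolving (S : Set (ModuleCat.{0} A)) : Prop where
  linearEquiv_mem : ∀ B C : ModuleCat.{0} A, B ∈ S → Nonempty (B ≃ₗ[A] C) → C ∈ S
  self_mem : ModuleCat.of A A ∈ S
  summand_mem : ∀ B C D : ModuleCat.{0} A, B ∈ S → Nonempty (B ≃ₗ[A] (↥C × ↥D)) → C ∈ S
  extension_mem : ∀ (B C D : ModuleCat.{0} A) (f : B →ₗ[A] C) (g : C →ₗ[A] D),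
    Function.Injective f → Function.Surjective g →
    LinearMap.range f = LinearMap.ker g → B ∈ S → D ∈ S → C ∈ S
  kernel_mem : ∀ (B C D : ModuleCat.{0} A) (f : B →ₗ[A] C) (g : C →ₗ[A] D),
    Function.Injective f → Function.Surjective g →
    LinearMap.range f = LinearMap.ker g → C ∈ S → D ∈ S → B ∈ S

variable {S : Set (ModuleCat.{0} A)} {U V W F₁ F₃ N₁ N₂ N₃ : Type}
  [AddCommGroup U] [Module A U] [AddCommGroup V] [Module A V] [AddCommGroup W] [Module A W]
  [AddCommGroup F₁] [Module A F₁] [AddCommGroup F₃] [Module A F₃]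
  [AddCommGroup N₁] [Module A N₁] [AddCommGroup N₂] [Module A N₂] [AddCommGroup N₃] [Module A N₃]

namespace IsResolving

theorem mem_of_linearEquiv (hS : IsResolving S) (e : V ≃ₗ[A] W) (hV : ModuleCat.of A V ∈ S) :
    ModuleCat.of A W ∈ S :=
  hS.linearEquiv_mem _ (.of A W) hV ⟨e⟩

theorem middle_mem_of_exact (hS : IsResolving S) {f : U →ₗ[A] V} {g : V →ₗ[A] W}
    (hf : Function.Injective f) (hg : Function.Surjective g) (hfg : Function.Exact f g)
    (hU : ModuleCat.of A U ∈ S) (hW : ModuleCat.of A W ∈ S) : ModuleCat.of A V ∈ S :=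
  hS.extension_mem (.of A U) (.of A V) (.of A W) f g hf hg hfg.linearMap_ker_eq.symm hU hW

theorem left_mem_of_exact (hS : IsResolving S) {f : U →ₗ[A] V} {g : V →ₗ[A] W}
    (hf : Function.Injective f) (hg : Function.Surjective g) (hfg : Function.Exact f g)
    (hV : ModuleCat.of A V ∈ S) (hW : ModuleCat.of A W ∈ S) : ModuleCat.of A U ∈ S :=
  hS.kernel_mem (.of A U) (.of A V) (.of A W) f g hf hg hfg.linearMap_ker_eq.symm hV hW

theorem prod_mem (hS : IsResolving S) (hV : ModuleCat.of A V ∈ S) (hW : ModuleCat.of A W ∈ S) :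
    ModuleCat.of A (V × W) ∈ S :=
  hS.middle_mem_of_exact LinearMap.inl_injective LinearMap.snd_surjective
    Function.Exact.inl_snd hV hW

theorem pi_fin_mem (hS : IsResolving S) : ∀ n : ℕ, ModuleCat.of A (Fin n → A) ∈ S
  | 0 => hS.summand_mem (.of A A) (.of A (Fin 0 → A)) (.of A A) hS.self_mem
      ⟨LinearEquiv.uniqueProd.symm⟩
  | n + 1 => hS.mem_of_linearEquiv (Fin.consLinearEquiv A fun _ => A)
      (hS.prod_mem hS.self_mem (hS.pi_fin_mem n))

theorem smul_top_mem (hS : IsResolving S) (hV : ModuleCat.of A V ∈ S) {x : A}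
    (hx : IsSMulRegular V x) :
    ModuleCat.of A ↥(Ideal.span {x} • (⊤ : Submodule A V)) ∈ S := by
  have hrange : LinearMap.range (LinearMap.lsmul A V x) = Ideal.span {x} • ⊤ := by
    ext v
    simp [Submodule.ideal_span_singleton_smul, Submodule.mem_smul_pointwise_iff_exists]
  exact hS.mem_of_linearEquiv
    ((LinearEquiv.ofInjective (LinearMap.lsmul A V x) hx).trans (LinearEquiv.ofEq _ _ hrange)) hV

theorem ker_coprod_mem (hS : IsResolving S) (f : U →ₗ[A] W) {g : V →ₗ[A] W}
    (hg : Function.Surjective g) (hU : ModuleCat.of A U ∈ S)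
    (hkg : ModuleCat.of A (LinearMap.ker g) ∈ S) :
    ModuleCat.of A (LinearMap.ker (f.coprod g)) ∈ S := by
  set E := LinearMap.ker (f.coprod g)
  refine hS.middle_mem_of_exact (g := LinearMap.fst A U V ∘ₗ E.subtype)
    (f := (LinearMap.inr A U V).restrict fun v hv => by simpa [E] using hv) ?_ ?_ ?_ hkg hU
  · intro v v' h
    exact Subtype.ext (congrArg (fun z : E => (z : U × V).2) h)
  · intro u
    obtain ⟨v, hv⟩ := hg (-f u)
    exact ⟨⟨(u, v), by simp [E, hv]⟩, rfl⟩
  · rintro ⟨⟨u, v⟩, huv⟩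
    simp only [E, LinearMap.mem_ker, LinearMap.coprod_apply] at huv
    simp only [LinearMap.coe_comp, Function.comp_apply, Submodule.coe_subtype,
      LinearMap.fst_apply, Set.mem_range, Subtype.exists, LinearMap.mem_ker]
    constructor
    · rintro rfl
      exact ⟨v, by simpa using huv, rfl⟩
    · rintro ⟨v', _, h⟩
      exact (congrArg (fun z : E => (z : U × V).1) h).symm

theorem ker_mem_of_ker_coprod_mem (hS : IsResolving S) {f : U →ₗ[A] W} (g : V →ₗ[A] W)
    (hf : Function.Surjective f) (hV : ModuleCat.of A V ∈ S)
    (hE : ModuleCat.of A (LinearMap.ker (f.coprod g)) ∈ S) :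
    ModuleCat.of A (LinearMap.ker f) ∈ S := by
  set E := LinearMap.ker (f.coprod g)
  refine hS.left_mem_of_exact (g := LinearMap.snd A U V ∘ₗ E.subtype)
    (f := (LinearMap.inl A U V).restrict fun u hu => by simpa [E] using hu) ?_ ?_ ?_ hE hV
  · intro u u' h
    exact Subtype.ext (congrArg (fun z : E => (z : U × V).1) h)
  · intro v
    obtain ⟨u, hu⟩ := hf (-g v)
    exact ⟨⟨(u, v), by simp [E, hu]⟩, rfl⟩
  · rintro ⟨⟨u, v⟩, huv⟩
    simp only [E, LinearMap.mem_ker, LinearMap.coprod_apply] at huv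
    simp only [LinearMap.coe_comp, Function.comp_apply, Submodule.coe_subtype,
      LinearMap.snd_apply, Set.mem_range, Subtype.exists, LinearMap.mem_ker]
    constructor
    · rintro rfl
      exact ⟨u, by simpa using huv, rfl⟩
    · rintro ⟨u', _, h⟩
      exact (congrArg (fun z : E => (z : U × V).2) h).symm

/-- Schanuel's lemma. -/
theorem ker_mem_of_ker_mem (hS : IsResolving S) {f : U →ₗ[A] W} {g : V →ₗ[A] W}
    (hf : Function.Surjective f) (hg : Function.Surjective g) (hU : ModuleCat.of A U ∈ S)
    (hV : ModuleCat.of A V ∈ S) (hkg : ModuleCat.of A (LinearMap.ker g) ∈ S) :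
    ModuleCat.of A (LinearMap.ker f) ∈ S :=
  hS.ker_mem_of_ker_coprod_mem g hf hV (hS.ker_coprod_mem f hg hU hkg)

end IsResolving

section Horseshoe

variable {f : N₁ →ₗ[A] N₂} {g : N₂ →ₗ[A] N₃} {p₁ : F₁ →ₗ[A] N₁} {p₃ : F₃ →ₗ[A] N₃}
  {ℓ : F₃ →ₗ[A] N₂}

theorem Function.Exact.surjective_coprod_of_lift (hfg : Function.Exact f g)
    (hp₁ : Function.Surjective p₁) (hp₃ : Function.Surjective p₃) (hℓ : g ∘ₗ ℓ = p₃) :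
    Function.Surjective ((f ∘ₗ p₁).coprod ℓ) := by
  intro y
  obtain ⟨v, hv⟩ := hp₃ (g y)
  obtain ⟨x, hx⟩ :=
    (hfg (y - ℓ v)).mp (by rw [map_sub, ← LinearMap.comp_apply, hℓ, hv, sub_self])
  obtain ⟨u, rfl⟩ := hp₁ x
  exact ⟨(u, v), by simp [hx]⟩

theorem IsResolving.ker_coprod_mem_of_lift (hS : IsResolving S) (hf : Function.Injective f)
    (hfg : Function.Exact f g) (hp₁ : Function.Surjective p₁) (hℓ : g ∘ₗ ℓ = p₃)
    (hk₁ : ModuleCat.of A (LinearMap.ker p₁) ∈ S) (hk₃ : ModuleCat.of A (LinearMap.ker p₃) ∈ S) :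
    ModuleCat.of A (LinearMap.ker ((f ∘ₗ p₁).coprod ℓ)) ∈ S := by
  set p := (f ∘ₗ p₁).coprod ℓ
  have hgℓ (v : F₃) : g (ℓ v) = p₃ v := by rw [← hℓ, LinearMap.comp_apply]
  have hκ : ∀ z ∈ LinearMap.ker p, LinearMap.snd A F₁ F₃ z ∈ LinearMap.ker p₃ := by
    rintro ⟨u, v⟩ h
    simpa [p, hfg.apply_apply_eq_zero, hgℓ] using congrArg g h
  have hι : ∀ u ∈ LinearMap.ker p₁, LinearMap.inl A F₁ F₃ u ∈ LinearMap.ker p := by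
    intro u hu
    simp_all [p]
  refine hS.middle_mem_of_exact (f := LinearMap.restrict _ hι) (g := LinearMap.restrict _ hκ)
    ?_ ?_ ?_ hk₁ hk₃
  · intro u u' h
    exact Subtype.ext (congrArg (fun z : LinearMap.ker p => (z : F₁ × F₃).1) h)
  · rintro ⟨v, hv⟩
    obtain ⟨x, hx⟩ := (hfg (ℓ v)).mp (by rw [hgℓ]; exact hv)
    obtain ⟨u, rfl⟩ := hp₁ x
    exact ⟨⟨(-u, v), by simp [p, hx]⟩, rfl⟩
  · rintro ⟨⟨u, v⟩, huv⟩
    constructor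
    · intro h
      obtain rfl : v = 0 := congrArg Subtype.val h
      have hu : p₁ u = 0 := hf (by simpa [p] using huv)
      exact ⟨⟨u, hu⟩, rfl⟩
    · rintro ⟨u', h⟩
      exact Subtype.ext (congrArg (fun z : LinearMap.ker p => (z : F₁ × F₃).2) h).symm

end Horseshoe

def HasSyzygyIn (S : Set (ModuleCat.{0} A)) (N : Type) [AddCommGroup N] [Module A N] : Prop :=
  ∃ (n : ℕ) (p : (Fin n → A) →ₗ[A] N),
    Function.Surjective p ∧ ModuleCat.of A (LinearMap.ker p) ∈ S

namespace HasSyzygyIn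

theorem finite (h : HasSyzygyIn S V) : Module.Finite A V :=
  let ⟨_, p, hp, _⟩ := h
  Module.Finite.of_surjective p hp

theorem ker_mem (h : HasSyzygyIn S W) (hS : IsResolving S) (hV : ModuleCat.of A V ∈ S)
    {q : V →ₗ[A] W} (hq : Function.Surjective q) : ModuleCat.of A (LinearMap.ker q) ∈ S :=
  let ⟨n, _, hp, hkp⟩ := h
  hS.ker_mem_of_ker_mem hq hp hV (hS.pi_fin_mem n) hkp

theorem of_surjective [Module.Finite A W] (hS : IsResolving S) (hV : ModuleCat.of A V ∈ S)
    {q : V →ₗ[A] W} (hq : Function.Surjective q) (hkq : ModuleCat.of A (LinearMap.ker q) ∈ S) :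
    HasSyzygyIn S W :=
  let ⟨n, p, hp⟩ := Module.Finite.exists_fin' A W
  ⟨n, p, hp, hS.ker_mem_of_ker_mem hp hq (hS.pi_fin_mem n) hV hkq⟩

theorem quotient [Module.Finite A V] (hS : IsResolving S) (hV : ModuleCat.of A V ∈ S)
    {K : Submodule A V} (hK : ModuleCat.of A K ∈ S) : HasSyzygyIn S (V ⧸ K) :=
  of_surjective hS hV K.mkQ_surjective (by rwa [K.ker_mkQ])

theorem of_linearEquiv (h : HasSyzygyIn S V) (e : V ≃ₗ[A] W) : HasSyzygyIn S W :=
  let ⟨n, p, hp, hkp⟩ := h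
  ⟨n, e.toLinearMap ∘ₗ p, e.surjective.comp hp, by rwa [LinearEquiv.ker_comp]⟩

theorem of_prod_left (h : HasSyzygyIn S (V × W)) (hS : IsResolving S) : HasSyzygyIn S V := by
  have := h.finite
  have : Module.Finite A V := .of_surjective (LinearMap.fst A V W) LinearMap.fst_surjective
  have : Module.Finite A W := .of_surjective (LinearMap.snd A V W) LinearMap.snd_surjective
  obtain ⟨m, p, hp⟩ := Module.Finite.exists_fin' A V
  obtain ⟨n, q, hq⟩ := Module.Finite.exists_fin' A W
  have hker : LinearMap.range ((LinearMap.ker p).subtype.prodMap (LinearMap.ker q).subtype) =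
      LinearMap.ker (p.prodMap q) := by
    rw [LinearMap.range_prodMap, Submodule.range_subtype, Submodule.range_subtype,
      LinearMap.ker_prodMap]
  have hpq : ModuleCat.of A (LinearMap.ker (p.prodMap q)) ∈ S :=
    h.ker_mem hS (hS.prod_mem (hS.pi_fin_mem m) (hS.pi_fin_mem n))
      (Prod.map_surjective.mpr ⟨hp, hq⟩)
  refine ⟨m, p, hp, hS.summand_mem _ _ (.of A (LinearMap.ker q)) hpq ⟨?_⟩⟩
  exact (LinearEquiv.ofEq _ _ hker.symm).trans (LinearEquiv.ofInjective _
    (Prod.map_injective.mpr ⟨Subtype.val_injective, Subtype.val_injective⟩)).symm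

variable {f : N₁ →ₗ[A] N₂} {g : N₂ →ₗ[A] N₃}

theorem of_exact (h₁ : HasSyzygyIn S N₁) (h₃ : HasSyzygyIn S N₃) (hS : IsResolving S)
    (hf : Function.Injective f) (hg : Function.Surjective g) (hfg : Function.Exact f g) :
    HasSyzygyIn S N₂ := by
  obtain ⟨a, p₁, hp₁, hk₁⟩ := h₁
  obtain ⟨c, p₃, hp₃, hk₃⟩ := h₃
  obtain ⟨ℓ, hℓ⟩ := Module.projective_lifting_property g p₃ hg
  have hp := hfg.surjective_coprod_of_lift hp₁ hp₃ hℓ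
  have := Module.Finite.of_surjective _ hp
  exact of_surjective hS (hS.prod_mem (hS.pi_fin_mem a) (hS.pi_fin_mem c)) hp
    (hS.ker_coprod_mem_of_lift hf hfg hp₁ hℓ hk₁ hk₃)

theorem ker_of_surjective [IsNoetherianRing A] (h₂ : HasSyzygyIn S N₂) (h₃ : HasSyzygyIn S N₃)
    (hS : IsResolving S) (hg : Function.Surjective g) : HasSyzygyIn S (LinearMap.ker g) := by
  obtain ⟨b, p, hp, hkp⟩ := h₂
  have : Module.Finite A N₂ := .of_surjective p hp
  have hq : ModuleCat.of A (LinearMap.ker (g ∘ₗ p)) ∈ S :=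
    h₃.ker_mem hS (hS.pi_fin_mem b) (hg.comp hp)
  have hw : ∀ u ∈ LinearMap.ker (g ∘ₗ p), p u ∈ LinearMap.ker g := fun _ hu => hu
  refine of_surjective hS hq (q := p.restrict hw) ?_ ?_
  · rintro ⟨y, hy⟩
    obtain ⟨u, rfl⟩ := hp y
    exact ⟨⟨u, hy⟩, rfl⟩
  · rw [LinearMap.ker_restrict]
    exact hS.mem_of_linearEquiv
      (Submodule.comapSubtypeEquivOfLe (LinearMap.ker_le_ker_comp p g)).symm hkp

theorem left_of_exact [IsNoetherianRing A] (h₂ : HasSyzygyIn S N₂) (h₃ : HasSyzygyIn S N₃)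
    (hS : IsResolving S) (hf : Function.Injective f) (hg : Function.Surjective g)
    (hfg : Function.Exact f g) : HasSyzygyIn S N₁ :=
  (h₂.ker_of_surjective h₃ hS hg).of_linearEquiv
    ((LinearEquiv.ofEq _ _ hfg.linearMap_ker_eq).trans (LinearEquiv.ofInjective f hf).symm)

end HasSyzygyIn

end Resolving

section RestrictScalars

variable (A : Type) {Q V W : Type} [CommRing A] [CommRing Q] [Algebra A Q]
  [AddCommGroup V] [Module Q V] [AddCommGroup W] [Module Q W]

/-- Instance search does not find `RestrictScalars.module` over the additive monoid structure
coming from `AddCommGroup`, which is the one `HasSyzygyIn` asks for. -/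
instance RestrictScalars.moduleOfAddCommGroup :
    @Module A (RestrictScalars A Q V) _ AddCommGroup.toAddCommMonoid :=
  RestrictScalars.module A Q V

def LinearMap.toRestrictScalars (f : V →ₗ[Q] W) :
    RestrictScalars A Q V →ₗ[A] RestrictScalars A Q W where
  toFun := f
  map_add' := f.map_add
  map_smul' r := f.map_smul (algebraMap A Q r)

def LinearEquiv.toRestrictScalars (e : V ≃ₗ[Q] W) :
    RestrictScalars A Q V ≃ₗ[A] RestrictScalars A Q W :=
  { e.toLinearMap.toRestrictScalars A, e with }

def RestrictScalars.prodEquiv :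
    RestrictScalars A Q (V × W) ≃ₗ[A] RestrictScalars A Q V × RestrictScalars A Q W :=
  { Equiv.refl _ with
    map_add' _ _ := rfl
    map_smul' _ _ := rfl }

def RestrictScalars.linearEquivOfIsScalarTower [Module A V] [IsScalarTower A Q V] :
    V ≃ₗ[A] RestrictScalars A Q V :=
  { (RestrictScalars.addEquiv A Q V).symm with
    map_smul' r v := (algebraMap_smul Q r v).symm }

end RestrictScalars

def syzygyPreimage {A : Type} [CommRing A] (S : Set (ModuleCat.{0} A)) (Q : Type) [CommRing Q]
    [Algebra A Q] : Set (ModuleCat.{0} Q) :=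
  {N | HasSyzygyIn S (RestrictScalars A Q N)}

theorem IsResolving.syzygyPreimage {A Q : Type} [CommRing A] [IsNoetherianRing A] [CommRing Q]
    [Algebra A Q] {S : Set (ModuleCat.{0} A)} (hS : IsResolving S) (hQ : HasSyzygyIn S Q) :
    IsResolving (syzygyPreimage S Q) where
  linearEquiv_mem _ _ hB := fun ⟨e⟩ => hB.of_linearEquiv (e.toRestrictScalars A)
  self_mem := hQ.of_linearEquiv (RestrictScalars.linearEquivOfIsScalarTower A)
  summand_mem _ _ _ hB := fun ⟨e⟩ =>
    have hBC := hB.of_linearEquiv ((e.toRestrictScalars A).trans (RestrictScalars.prodEquiv A))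
    hBC.of_prod_left hS
  extension_mem _ _ _ f g hf hg hfg hB hD :=
    have hfg : Function.Exact f g := LinearMap.exact_iff.mpr hfg.symm
    hB.of_exact hD hS (f := f.toRestrictScalars A) (g := g.toRestrictScalars A) hf hg hfg
  kernel_mem _ _ _ f g hf hg hfg hC hD :=
    have hfg : Function.Exact f g := LinearMap.exact_iff.mpr hfg.symm
    hC.left_of_exact hD hS (f := f.toRestrictScalars A) (g := g.toRestrictScalars A) hf hg hfg

theorem syzygy_mem_res_closure_of_mem_res_closure_quotient
    [IsNoetherianRing R]
    (X : Type) [AddCommGroup X] [Module R X] [Module.Finite R X]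
    (x : R) (hxR : IsSMulRegular R x) (hxX : IsSMulRegular X x)
    (M : ModuleCat.{0} (R ⧸ Ideal.span {x}))
    (hM : ∀ T : Set (ModuleCat.{0} (R ⧸ Ideal.span {x})),
      (∀ A B : ModuleCat.{0} (R ⧸ Ideal.span {x}), A ∈ T →
        Nonempty (A ≃ₗ[R ⧸ Ideal.span {x}] B) → B ∈ T) →
      (ModuleCat.of (R ⧸ Ideal.span {x}) (R ⧸ Ideal.span {x}) ∈ T) →
      (∀ A B C : ModuleCat.{0} (R ⧸ Ideal.span {x}), A ∈ T →
        Nonempty (A ≃ₗ[R ⧸ Ideal.span {x}] (↥B × ↥C)) → B ∈ T) →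
      (∀ (A B C : ModuleCat.{0} (R ⧸ Ideal.span {x}))
        (f : A →ₗ[R ⧸ Ideal.span {x}] B) (g : B →ₗ[R ⧸ Ideal.span {x}] C),
        Function.Injective f → Function.Surjective g →
        LinearMap.range f = LinearMap.ker g → A ∈ T → C ∈ T → B ∈ T) →
      (∀ (A B C : ModuleCat.{0} (R ⧸ Ideal.span {x}))
        (f : A →ₗ[R ⧸ Ideal.span {x}] B) (g : B →ₗ[R ⧸ Ideal.span {x}] C),
        Function.Injective f → Function.Surjective g →
        LinearMap.range f = LinearMap.ker g → B ∈ T → C ∈ T → A ∈ T) →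
      ModuleCat.of (R ⧸ Ideal.span {x})
        (X ⧸ (Ideal.span {x} • (⊤ : Submodule R X))) ∈ T →
      M ∈ T)
    (K : ModuleCat.{0} R)
    (hK : IsSyzygyOf R K
      (@ModuleCat.of R _ (RestrictScalars R (R ⧸ Ideal.span {x}) ↥M) _
        (RestrictScalars.module R (R ⧸ Ideal.span {x}) ↥M)))
    (S : Set (ModuleCat.{0} R))
    (hiso : ∀ A B : ModuleCat.{0} R, A ∈ S → Nonempty (A ≃ₗ[R] B) → B ∈ S)
    (hR : ModuleCat.of R R ∈ S)
    (hsummand : ∀ A B C : ModuleCat.{0} R, A ∈ S →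
      Nonempty (A ≃ₗ[R] (↥B × ↥C)) → B ∈ S)
    (hext : ∀ (A B C : ModuleCat.{0} R) (f : A →ₗ[R] B) (g : B →ₗ[R] C),
      Function.Injective f → Function.Surjective g →
      LinearMap.range f = LinearMap.ker g → A ∈ S → C ∈ S → B ∈ S)
    (hker : ∀ (A B C : ModuleCat.{0} R) (f : A →ₗ[R] B) (g : B →ₗ[R] C),
      Function.Injective f → Function.Surjective g →
      LinearMap.range f = LinearMap.ker g → B ∈ S → C ∈ S → A ∈ S)
    (hXS : ModuleCat.of R X ∈ S) :
    K ∈ S := by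
  obtain ⟨n, p, hp, -, ⟨e⟩⟩ := hK
  have hS : IsResolving S := ⟨hiso, hR, hsummand, hext, hker⟩
  have hQ : HasSyzygyIn S (R ⧸ Ideal.span {x}) := by
    refine .quotient hS hR ?_
    rw [← Ideal.mul_top (Ideal.span {x})]
    exact hS.smul_top_mem hR hxR
  have hXT : ModuleCat.of _ (X ⧸ (Ideal.span {x} • (⊤ : Submodule R X))) ∈
      syzygyPreimage S (R ⧸ Ideal.span {x}) :=
    (HasSyzygyIn.quotient hS hXS (hS.smul_top_mem hXS hxX)).of_linearEquiv
      (RestrictScalars.linearEquivOfIsScalarTower R)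
  have hT := hS.syzygyPreimage hQ
  have hMT : M ∈ syzygyPreimage S (R ⧸ Ideal.span {x}) := hM _ hT.1 hT.2 hT.3 hT.4 hT.5 hXT
  exact hS.mem_of_linearEquiv e.symm (hMT.ker_mem hS (hS.pi_fin_mem n) hp)
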